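/- arXiv:2411.13146 — 5 statements merged into one kernel-verified Lean document; each statement's English description precedes it below -/
import Mathlib

section
/- For all even integers k ≥ 4, we have 2(k+1)(k−1)^k > 2(k−2)^{k+1} + (k+1)(k−2)^k + (k−1); equivalently, P_ℝ(k−1) < 0 where P_ℝ(m) = 2(m−1)^{k+1} + (k+1)(m−1)^k − 2(k+1)m^k + (k−1). -/
lemma aux_binom (a n : ℕ) : a ^ (n + 1) + (n + 1) * a ^ n ≤ (a + 1) ^ (n + 1) := by
  induction n with
  | zero => simp
  | succ n ih =>
    calc a ^ (n + 2) + (n + 2) * a ^ (n + 1)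
        ≤ (a + 1) * (a ^ (n + 1) + (n + 1) * a ^ n) := by
          have p1 : a ^ (n + 2) = a * a ^ (n + 1) := by ring
          have p2 : a ^ (n + 1) = a * a ^ n := by ring
          nlinarith [p1, p2, Nat.zero_le (a ^ n)]
      _ ≤ (a + 1) * (a + 1) ^ (n + 1) := Nat.mul_le_mul_left _ ih
      _ = (a + 1) ^ (n + 2) := by ring

lemma aux_double (a n : ℕ) (ha : 1 ≤ a) (hn : a ≤ n) : 2 * a ^ n ≤ (a + 1) ^ n := by
  obtain ⟨m, rfl⟩ : ∃ m, n = m + 1 := ⟨n - 1, by omega⟩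
  have h1 := aux_binom a m
  have h2 : a * a ^ m ≤ (m + 1) * a ^ m := Nat.mul_le_mul_right _ (by omega)
  have h3 : a ^ (m + 1) = a * a ^ m := by ring
  omega

theorem P_neg_at_k_sub_one_even (k : ℕ) (hk : 4 ≤ k) (hke : Even k) :
    2 * ((k : ℤ) + 1) * ((k : ℤ) - 1) ^ k >
      2 * ((k : ℤ) - 2) ^ (k + 1) + ((k : ℤ) + 1) * ((k : ℤ) - 2) ^ k + ((k : ℤ) - 1) ∧
    2 * (((k : ℤ) - 1) - 1) ^ (k + 1) + ((k : ℤ) + 1) * (((k : ℤ) - 1) - 1) ^ k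
      - 2 * ((k : ℤ) + 1) * ((k : ℤ) - 1) ^ k + ((k : ℤ) - 1) < 0 := by
  obtain ⟨a, rfl⟩ : ∃ a, k = a + 2 := ⟨k - 2, by omega⟩
  have ha : 2 ≤ a := by omega
  have haz : (2 : ℤ) ≤ (a : ℤ) := by exact_mod_cast ha
  have hd : 2 * a ^ (a + 2) ≤ (a + 1) ^ (a + 2) := aux_double a (a + 2) (by omega) (by omega)
  have hdz : 2 * (a : ℤ) ^ (a + 2) ≤ ((a : ℤ) + 1) ^ (a + 2) := by exact_mod_cast hd
  have hpos : (1 : ℤ) ≤ (a : ℤ) ^ (a + 2) := by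
    calc (1 : ℤ) = 1 ^ (a + 2) := (one_pow _).symm
    _ ≤ (a : ℤ) ^ (a + 2) := pow_le_pow_left₀ (by norm_num) (by linarith) _
  have hkey : 2 * ((a : ℤ) + 3) * ((a : ℤ) + 1) ^ (a + 2) >
      2 * (a : ℤ) ^ (a + 2 + 1) + ((a : ℤ) + 3) * (a : ℤ) ^ (a + 2) + ((a : ℤ) + 1) := by
    have h3 : (a : ℤ) ^ (a + 2 + 1) = (a : ℤ) ^ (a + 2) * a := pow_succ _ _
    nlinarith [hdz, hpos, haz, mul_le_mul_of_nonneg_left hdz (by linarith : (0:ℤ) ≤ (a:ℤ) + 3)]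
  constructor
  · push_cast
    have e1 : ((a : ℤ) + 2 + 1) = (a : ℤ) + 3 := by ring
    have e2 : ((a : ℤ) + 2 - 1) = (a : ℤ) + 1 := by ring
    have e3 : ((a : ℤ) + 2 - 2) = (a : ℤ) := by ring
    rw [e1, e2, e3]; exact hkey
  · push_cast
    have e1 : ((a : ℤ) + 2 + 1) = (a : ℤ) + 3 := by ring
    have e2 : ((a : ℤ) + 2 - 1 - 1) = (a : ℤ) := by ring
    have e3 : ((a : ℤ) + 2 - 1) = (a : ℤ) + 1 := by ring
    rw [e2, e1, e3]; linarith
end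

section
/- For all even integers k ≥ 8, P_ℝ(2(k−1)) > 0, where P_ℝ(m) = 2(m−1)^{k+1} + (k+1)(m−1)^k − 2(k+1)m^k + (k−1). -/
/-- Bernoulli-type bound: `b^(n+1) + (n+1) b^n ≤ (b+1)^(n+1)` in `ℕ`. -/
lemma bern_aux (b : ℕ) : ∀ n : ℕ, b ^ (n + 1) + (n + 1) * b ^ n ≤ (b + 1) ^ (n + 1) := by
  intro n
  induction n with
  | zero => simp
  | succ n ih =>
    have e : (b ^ (n + 1) + (n + 1) * b ^ n) * (b + 1)
        = b ^ (n + 2) + (n + 2) * b ^ (n + 1) + (n + 1) * b ^ n := by ring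
    calc b ^ (n + 2) + (n + 2) * b ^ (n + 1)
        ≤ (b ^ (n + 1) + (n + 1) * b ^ n) * (b + 1) := by rw [e]; omega
      _ ≤ (b + 1) ^ (n + 1) * (b + 1) := Nat.mul_le_mul_right _ ih
      _ = (b + 1) ^ (n + 2) := by ring

/-- Key inequality: `2(k+1)(2k-2)^k ≤ 5(k-1)(2k-3)^k` for `k = t+8`. -/
lemma key_aux : ∀ t : ℕ, 2 * (t + 9) * (2 * t + 14) ^ (t + 8) ≤ 5 * (t + 7) * (2 * t + 13) ^ (t + 8) := by
  intro t
  induction t with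
  | zero => norm_num
  | succ t ih =>
    have e1 : 2 * (t + 1) + 14 = 2 * t + 16 := by ring
    have e2 : 2 * (t + 1) + 13 = 2 * t + 15 := by ring
    have e3 : t + 1 + 9 = t + 10 := by ring
    have e4 : t + 1 + 7 = t + 8 := by ring
    have e5 : t + 1 + 8 = t + 9 := by ring
    rw [e1, e2, e3, e4, e5]
    -- Step 1: 4(t+10)(2t+14)^(t+7) ≤ 5(2t+15)(2t+13)^(t+7)
    have h1 : 4 * (t + 10) * (2 * t + 14) ^ (t + 7) ≤ 5 * (2 * t + 15) * (2 * t + 13) ^ (t + 7) := by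
      have hpos : 0 < (t + 7) * (2 * t + 13) := by positivity
      refine Nat.le_of_mul_le_mul_right ?_ hpos
      have hx : 4 * (t + 10) * ((t + 7) * (2 * t + 13)) ≤ (2 * t + 15) * (2 * (t + 9) * (2 * t + 14)) := by
        nlinarith
      calc 4 * (t + 10) * (2 * t + 14) ^ (t + 7) * ((t + 7) * (2 * t + 13))
          = (4 * (t + 10) * ((t + 7) * (2 * t + 13))) * (2 * t + 14) ^ (t + 7) := by ring
        _ ≤ ((2 * t + 15) * (2 * (t + 9) * (2 * t + 14))) * (2 * t + 14) ^ (t + 7) :=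
            Nat.mul_le_mul_right _ hx
        _ = (2 * t + 15) * (2 * (t + 9) * (2 * t + 14) ^ (t + 8)) := by ring
        _ ≤ (2 * t + 15) * (5 * (t + 7) * (2 * t + 13) ^ (t + 8)) := Nat.mul_le_mul_left _ ih
        _ = 5 * (2 * t + 15) * (2 * t + 13) ^ (t + 7) * ((t + 7) * (2 * t + 13)) := by ring
    -- Step 2: Bernoulli with b = (2t+13)(t+8)
    have h2 : 2 * (t + 7) * (t + 8) ^ (t + 8) * (2 * t + 13) ^ (t + 7)
        ≤ (2 * t + 15) ^ (t + 8) * (t + 7) ^ (t + 8) := by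
      have hb := bern_aux ((2 * t + 13) * (t + 8)) (t + 7)
      have he : (2 * t + 13) * (t + 8) + 1 = (2 * t + 15) * (t + 7) := by ring
      rw [he] at hb
      calc 2 * (t + 7) * (t + 8) ^ (t + 8) * (2 * t + 13) ^ (t + 7)
          = ((2 * t + 13) * (t + 8)) ^ (t + 7 + 1) + (t + 7 + 1) * ((2 * t + 13) * (t + 8)) ^ (t + 7) := by
            rw [mul_pow, mul_pow]; ring
        _ ≤ ((2 * t + 15) * (t + 7)) ^ (t + 7 + 1) := hb
        _ = (2 * t + 15) ^ (t + 8) * (t + 7) ^ (t + 8) := by rw [mul_pow]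
    -- Combine
    have hpos2 : 0 < (t + 7) ^ (t + 8) := by positivity
    refine Nat.le_of_mul_le_mul_right ?_ hpos2
    have e6 : (2 * t + 16) ^ (t + 9) = 2 ^ (t + 9) * (t + 8) ^ (t + 9) := by
      rw [show 2 * t + 16 = 2 * (t + 8) by ring, mul_pow]
    have e7 : (2 * t + 14) ^ (t + 7) = 2 ^ (t + 7) * (t + 7) ^ (t + 7) := by
      rw [show 2 * t + 14 = 2 * (t + 7) by ring, mul_pow]
    calc 2 * (t + 10) * (2 * t + 16) ^ (t + 9) * (t + 7) ^ (t + 8)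
        = (4 * (t + 10) * (2 * t + 14) ^ (t + 7)) * (2 * (t + 7) * (t + 8) ^ (t + 9)) := by
          rw [e6, e7]; ring
      _ ≤ (5 * (2 * t + 15) * (2 * t + 13) ^ (t + 7)) * (2 * (t + 7) * (t + 8) ^ (t + 9)) :=
          Nat.mul_le_mul_right _ h1
      _ = (5 * (t + 8) * (2 * t + 15)) * (2 * (t + 7) * (t + 8) ^ (t + 8) * (2 * t + 13) ^ (t + 7)) := by
          ring
      _ ≤ (5 * (t + 8) * (2 * t + 15)) * ((2 * t + 15) ^ (t + 8) * (t + 7) ^ (t + 8)) :=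
          Nat.mul_le_mul_left _ h2
      _ = 5 * (t + 8) * (2 * t + 15) ^ (t + 9) * (t + 7) ^ (t + 8) := by ring

theorem P_pos_at_two_k_sub_one_large (k : ℕ) (hk : 8 ≤ k) (hke : Even k) :
    2 * (2 * ((k : ℤ) - 1) - 1) ^ (k + 1) + ((k : ℤ) + 1) * (2 * ((k : ℤ) - 1) - 1) ^ k
      - 2 * ((k : ℤ) + 1) * (2 * ((k : ℤ) - 1)) ^ k + ((k : ℤ) - 1) > 0 := by
  obtain ⟨t, rfl⟩ : ∃ t, k = t + 8 := ⟨k - 8, by omega⟩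
  have h := key_aux t
  have hZ : (2 * ((t : ℤ) + 9) * (2 * (t : ℤ) + 14) ^ (t + 8)
      ≤ 5 * ((t : ℤ) + 7) * (2 * (t : ℤ) + 13) ^ (t + 8)) := by exact_mod_cast h
  have ht : (0 : ℤ) ≤ (t : ℤ) := Int.natCast_nonneg t
  push_cast
  have e1 : 2 * (2 * ((t : ℤ) + 8 - 1) - 1) ^ (t + 8 + 1)
      + ((t : ℤ) + 8 + 1) * (2 * ((t : ℤ) + 8 - 1) - 1) ^ (t + 8)
      = 5 * ((t : ℤ) + 7) * (2 * (t : ℤ) + 13) ^ (t + 8) := by ring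
  have e2 : 2 * ((t : ℤ) + 8 + 1) * (2 * ((t : ℤ) + 8 - 1)) ^ (t + 8)
      = 2 * ((t : ℤ) + 9) * (2 * (t : ℤ) + 14) ^ (t + 8) := by ring
  linarith
end

section
/- The function L(k) = ln(2(k+1)/(3(k−1))) + k·ln((k−1)/(k−2)) is strictly decreasing on [4, ∞); equivalently, its derivative ln((k−1)/(k−2)) − 2/((k+1)(k−1)) − k/((k−1)(k−2)) is negative for all real k ≥ 4. -/
open Real

theorem L_strict_anti_and_deriv_neg :
    StrictAntiOn (fun k : ℝ => Real.log (2 * (k + 1) / (3 * (k - 1))) + k * Real.log ((k - 1) / (k - 2)))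
      (Set.Ici (4 : ℝ)) ∧
    ∀ k : ℝ, 4 ≤ k →
      Real.log ((k - 1) / (k - 2)) - 2 / ((k + 1) * (k - 1)) - k / ((k - 1) * (k - 2)) < 0 := by
  have hD : ∀ k : ℝ, 4 ≤ k →
      Real.log ((k - 1) / (k - 2)) - 2 / ((k + 1) * (k - 1)) - k / ((k - 1) * (k - 2)) < 0 := by
    intro k hk
    have h1 : (0:ℝ) < k - 2 := by linarith
    have h2 : (0:ℝ) < k - 1 := by linarith
    have h3 : (0:ℝ) < k + 1 := by linarith
    have hq : (0:ℝ) < (k - 1) / (k - 2) := by positivity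
    have hne : (k - 1) / (k - 2) ≠ 1 := by
      intro h
      have := (div_eq_one_iff_eq h1.ne').mp h
      linarith
    have hlog : Real.log ((k - 1) / (k - 2)) < (k - 1) / (k - 2) - 1 :=
      Real.log_lt_sub_one_of_pos hq hne
    have heq : (k - 1) / (k - 2) - 1 - 2 / ((k + 1) * (k - 1)) - k / ((k - 1) * (k - 2))
        = -3 * (k - 1) / ((k + 1) * (k - 1) * (k - 2)) := by
      field_simp
      ring
    have hneg : -3 * (k - 1) / ((k + 1) * (k - 1) * (k - 2)) < 0 := by
      apply div_neg_of_neg_of_pos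
      · linarith
      · positivity
    linarith [heq ▸ hneg]
  have hderiv : ∀ k : ℝ, 4 < k →
      HasDerivAt (fun k : ℝ => Real.log (2 * (k + 1) / (3 * (k - 1))) + k * Real.log ((k - 1) / (k - 2)))
        (Real.log ((k - 1) / (k - 2)) - 2 / ((k + 1) * (k - 1)) - k / ((k - 1) * (k - 2))) k := by
    intro k hk
    have h1 : (0:ℝ) < k - 2 := by linarith
    have h2 : (0:ℝ) < k - 1 := by linarith
    have h3 : (0:ℝ) < k + 1 := by linarith
    have hden1 : (3:ℝ) * (k - 1) ≠ 0 := by positivity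
    have hden2 : (k - 2 : ℝ) ≠ 0 := h1.ne'
    have hgpos : (0:ℝ) < 2 * (k + 1) / (3 * (k - 1)) := by positivity
    have hqpos : (0:ℝ) < (k - 1) / (k - 2) := by positivity
    have ha : HasDerivAt (fun k : ℝ => 2 * (k + 1)) 2 k := by
      simpa using ((hasDerivAt_id k).add_const 1).const_mul 2
    have hb : HasDerivAt (fun k : ℝ => 3 * (k - 1)) 3 k := by
      simpa using ((hasDerivAt_id k).sub_const 1).const_mul 3
    have hg : HasDerivAt (fun k : ℝ => 2 * (k + 1) / (3 * (k - 1)))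
        ((2 * (3 * (k - 1)) - 2 * (k + 1) * 3) / (3 * (k - 1)) ^ 2) k := ha.div hb hden1
    have hlogg := hg.log hgpos.ne'
    have hq : HasDerivAt (fun k : ℝ => (k - 1) / (k - 2))
        ((1 * (k - 2) - (k - 1) * 1) / (k - 2) ^ 2) k :=
      ((hasDerivAt_id k).sub_const 1).div ((hasDerivAt_id k).sub_const 2) hden2
    have hlogq := hq.log hqpos.ne'
    have hprod := (hasDerivAt_id k).mul hlogq
    have hsum := hlogg.add hprod
    refine hsum.congr_deriv ?_
    have e1 : (2 * (3 * (k - 1)) - 2 * (k + 1) * 3) / (3 * (k - 1)) ^ 2 /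
        (2 * (k + 1) / (3 * (k - 1))) = -(2 / ((k + 1) * (k - 1))) := by
      field_simp
      ring
    have e2 : (1 * (k - 2) - (k - 1) * 1) / (k - 2) ^ 2 / ((k - 1) / (k - 2))
        = -(1 / ((k - 1) * (k - 2))) := by
      field_simp
      ring
    rw [e1, e2]
    simp only [id_eq, one_mul]
    ring
  refine ⟨?_, hD⟩
  apply strictAntiOn_of_deriv_neg (convex_Ici 4)
  · intro x hx
    have hx4 : (4:ℝ) ≤ x := hx
    have h1 : (0:ℝ) < x - 2 := by linarith
    have h2 : (0:ℝ) < x - 1 := by linarith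
    have h3 : (0:ℝ) < x + 1 := by linarith
    have c1 : ContinuousAt (fun k : ℝ => 2 * (k + 1) / (3 * (k - 1))) x := by
      apply ContinuousAt.div (by fun_prop) (by fun_prop)
      positivity
    have c2 : ContinuousAt (fun k : ℝ => (k - 1) / (k - 2)) x := by
      apply ContinuousAt.div (by fun_prop) (by fun_prop)
      exact h1.ne'
    have hgpos : (0:ℝ) < 2 * (x + 1) / (3 * (x - 1)) := by positivity
    have hqpos : (0:ℝ) < (x - 1) / (x - 2) := by positivity
    exact ((c1.log hgpos.ne').add
      (continuousAt_id.mul (c2.log hqpos.ne'))).continuousWithinAt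
  · intro x hx
    rw [interior_Ici] at hx
    rw [(hderiv x hx).deriv]
    exact hD x (le_of_lt hx)
end

section
/- For all odd integers k ≥ 5, we have 2(k+1)(k−2)^k > (3k−5)(k−3)^k + (k−1); equivalently, P_ℝ(k−2) < 0 where P_ℝ(m) = 2(m−1)^{k+1} + (k+1)(m−1)^k − 2(k+1)m^k + (k−1). -/
lemma aux_pow (a : ℤ) (ha : 0 ≤ a) : ∀ j : ℕ, a ^ j * (a + j) ≤ (a + 1) ^ j * a := by
  intro j
  induction j with
  | zero => simp
  | succ j ih =>
    have h1 : (0:ℤ) ≤ a ^ j := pow_nonneg ha j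
    push_cast [pow_succ]
    push_cast at ih
    nlinarith [mul_le_mul_of_nonneg_left ih (by linarith : (0:ℤ) ≤ a + 1)]

lemma key_pow (a : ℤ) (k : ℕ) (ha : 2 ≤ a) (hak : a ≤ k) : 2 * a ^ k ≤ (a + 1) ^ k := by
  have h := aux_pow a (by linarith) k
  have h1 : (0:ℤ) ≤ a ^ k := pow_nonneg (by linarith) k
  have h2 : 2 * a ^ k * a ≤ (a + 1) ^ k * a := by nlinarith
  exact le_of_mul_le_mul_right h2 (by linarith)

theorem P_neg_at_k_sub_two_odd (k : ℕ) (hk : 5 ≤ k) (hodd : Odd k) :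
    2 * ((k : ℤ) + 1) * ((k : ℤ) - 2) ^ k > (3 * (k : ℤ) - 5) * ((k : ℤ) - 3) ^ k + ((k : ℤ) - 1) ∧
    2 * (((k : ℤ) - 2) - 1) ^ (k + 1) + ((k : ℤ) + 1) * (((k : ℤ) - 2) - 1) ^ k
      - 2 * ((k : ℤ) + 1) * ((k : ℤ) - 2) ^ k + ((k : ℤ) - 1) < 0 := by
  have hk' : (5:ℤ) ≤ (k:ℤ) := by exact_mod_cast hk
  set a : ℤ := (k:ℤ) - 3 with ha_def
  have ha : 2 ≤ a := by omega
  have hak : a ≤ (k:ℤ) := by omega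
  have hkey : 2 * a ^ k ≤ (a + 1) ^ k := key_pow a k ha (by exact_mod_cast hak)
  have hpow : 1 ≤ a ^ k := one_le_pow₀ (by linarith : (1:ℤ) ≤ a)
  have heq : (k:ℤ) - 2 = a + 1 := by omega
  have first : 2 * ((k : ℤ) + 1) * ((k : ℤ) - 2) ^ k >
      (3 * (k : ℤ) - 5) * ((k : ℤ) - 3) ^ k + ((k : ℤ) - 1) := by
    rw [heq]
    nlinarith [hkey, hpow, hk']
  refine ⟨first, ?_⟩
  have h2 : ((k:ℤ) - 2 - 1) = a := by omega
  rw [h2, pow_succ]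
  rw [heq] at first ⊢
  nlinarith [first, hpow]
end

section
/- For all odd integers k ≥ 5, P_ℝ((k+1)(k−2)) > 0, where P_ℝ(m) = 2(m−1)^{k+1} + (k+1)(m−1)^k − 2(k+1)m^k + (k−1). -/
lemma aux_pow_bound (a : ℤ) (ha : 0 ≤ a) : ∀ k : ℕ, (a - k) * (a + 1) ^ k ≤ a ^ (k + 1) := by
  intro k
  induction k with
  | zero => simp
  | succ n ih =>
    have hpos : (0:ℤ) ≤ (a + 1) ^ n := by positivity
    have h1 : (a - (n + 1 : ℕ)) * (a + 1) ≤ a * (a - n) := by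
      push_cast; nlinarith
    calc (a - (n + 1 : ℕ)) * (a + 1) ^ (n + 1)
        = ((a - (n + 1 : ℕ)) * (a + 1)) * (a + 1) ^ n := by ring
      _ ≤ (a * (a - n)) * (a + 1) ^ n := by
          exact mul_le_mul_of_nonneg_right h1 hpos
      _ = a * ((a - n) * (a + 1) ^ n) := by ring
      _ ≤ a * a ^ (n + 1) := mul_le_mul_of_nonneg_left ih ha
      _ = a ^ (n + 1 + 1) := by ring

theorem P_pos_at_case4 (k : ℕ) (hk : 5 ≤ k) (hodd : Odd k) :
    2 * ((((k : ℤ) + 1) * ((k : ℤ) - 2)) - 1) ^ (k + 1)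
      + ((k : ℤ) + 1) * ((((k : ℤ) + 1) * ((k : ℤ) - 2)) - 1) ^ k
      - 2 * ((k : ℤ) + 1) * (((k : ℤ) + 1) * ((k : ℤ) - 2)) ^ k + ((k : ℤ) - 1) > 0 := by
  set K : ℤ := (k : ℤ) with hKdef
  have hK : (5:ℤ) ≤ K := by rw [hKdef]; exact_mod_cast hk
  set A : ℤ := K ^ 2 - K - 3 with hAdef
  have hA : 0 ≤ A := by nlinarith
  have hAK : 0 < A - K := by nlinarith
  have hM : (K + 1) * (K - 2) = A + 1 := by ring
  have hM1 : (K + 1) * (K - 2) - 1 = A := by ring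
  rw [hM1, hM]
  have key : (A - K) * (A + 1) ^ k ≤ A ^ (k + 1) := aux_pow_bound A hA k
  have hMk : (0:ℤ) ≤ (A + 1) ^ k := by positivity
  have hAk : (0:ℤ) ≤ A ^ k := by positivity
  have key2 : 2 * (K + 1) * ((A - K) * (A + 1) ^ k) ≤ 2 * (K + 1) * (A ^ k * A) := by
    have h2 : (0:ℤ) ≤ 2 * (K + 1) := by linarith
    have : A ^ (k + 1) = A ^ k * A := pow_succ A k
    rw [← this]
    exact mul_le_mul_of_nonneg_left key h2
  have poly : 2 * (K + 1) * A ≤ (2 * A + (K + 1)) * (A - K) := by nlinarith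
  have poly2 : 2 * (K + 1) * (A ^ k * A) ≤ (2 * A + (K + 1)) * (A - K) * A ^ k := by
    calc 2 * (K + 1) * (A ^ k * A) = (2 * (K + 1) * A) * A ^ k := by ring
      _ ≤ (2 * A + (K + 1)) * (A - K) * A ^ k := mul_le_mul_of_nonneg_right poly hAk
  have hstrict : 0 < (2 * A ^ (k + 1) + (K + 1) * A ^ k - 2 * (K + 1) * (A + 1) ^ k
      + (K - 1)) * (A - K) := by
    have expand : (2 * A ^ (k + 1) + (K + 1) * A ^ k - 2 * (K + 1) * (A + 1) ^ k
        + (K - 1)) * (A - K)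
        = (2 * A + (K + 1)) * (A - K) * A ^ k
          - 2 * (K + 1) * ((A - K) * (A + 1) ^ k) + (K - 1) * (A - K) := by
      rw [pow_succ]; ring
    rw [expand]
    have hlast : 0 < (K - 1) * (A - K) := by nlinarith
    nlinarith [key2, poly2]
  rcases mul_pos_iff.mp hstrict with ⟨h, _⟩ | ⟨_, h⟩
  · linarith
  · linarith
end
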